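/- arXiv:2010.14181 — 5 statements merged into one kernel-verified Lean document; each statement's English description precedes it below -/
import Mathlib

section
/- Let U, m ≥ 1, let A = {a_1, …, a_m} be a set of m integers in {1, …, U}, and let B, C ⊆ {1, …, U}. Define the 2mU-dimensional 0/1 vectors v'_{A+B} := the concatenation over i = 1, …, m of the blocks 0^{a_i} ∘ v_B ∘ 0^{U−a_i}, and v'_C := the m-fold repetition of the block v_C ∘ 0^U. Then the inner product of v'_{A+B} and v'_C is at least 1 if and only if there exist a ∈ A, b ∈ B, c ∈ C with a + b = c. -/
/-- Characteristic vector (over ℕ) of a set `X ⊆ {1, …, U}`: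
position `i ∈ {1, …, U}` carries a `1` iff `i ∈ X`. -/
def charVec (U : ℕ) (X : Finset ℕ) : List ℕ :=
  (List.range U).map (fun i => if i + 1 ∈ X then 1 else 0)

/-- Inner product of two 0/1 vectors given as lists of equal length. -/
def innerProd (u v : List ℕ) : ℕ := (List.zipWith (· * ·) u v).sum

/-!
Both vectors consist of m blocks of length 2U. The i-th block of v'_{A+B} is the characteristic
vector of a_i + B in {1, …, 2U}, and every block of v'_C is that of C. Hence the inner product is
the sum over i of the inner products of these characteristic vectors, which is positive exactly
when some a_i + B meets C.
-/

lemma one_le_list_sum_iff {l : List ℕ} : 1 ≤ l.sum ↔ ∃ x ∈ l, 1 ≤ x := by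
  simp only [Nat.one_le_iff_ne_zero, Ne, List.sum_eq_zero_iff, not_forall, exists_prop]

lemma innerProd_append {u₁ v₁ : List ℕ} (u₂ v₂ : List ℕ) (h : u₁.length = v₁.length) :
    innerProd (u₁ ++ u₂) (v₁ ++ v₂) = innerProd u₁ v₁ + innerProd u₂ v₂ := by
  rw [innerProd, List.zipWith_append h, List.sum_append, innerProd, innerProd]

lemma innerProd_flatten_map_replicate {α : Type*} (l : List α) (f : α → List ℕ) (g : List ℕ)
    (hlen : ∀ x ∈ l, (f x).length = g.length) :
    innerProd (l.map f).flatten (List.replicate l.length g).flatten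
      = (l.map fun x => innerProd (f x) g).sum := by
  induction l with
  | nil => rfl
  | cons x xs ih =>
    simp only [List.map_cons, List.length_cons, List.replicate_succ, List.flatten_cons,
      List.sum_cons]
    rw [innerProd_append _ _ (hlen x List.mem_cons_self),
      ih fun y hy => hlen y (List.mem_cons_of_mem x hy)]

@[simp]
lemma length_charVec (n : ℕ) (X : Finset ℕ) : (charVec n X).length = n := by
  simp only [charVec, List.length_map, List.length_range]

lemma charVec_add (n k : ℕ) (X : Finset ℕ) :
    charVec (n + k) X
      = charVec n X ++ (List.range k).map fun i => if n + i + 1 ∈ X then 1 else 0 := by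
  simp only [charVec, List.range_add, List.map_append, List.map_map, Function.comp_def]

lemma charVec_append_replicate_zero {n : ℕ} {X : Finset ℕ} (hX : ∀ x ∈ X, x ≤ n) (k : ℕ) :
    charVec n X ++ List.replicate k 0 = charVec (n + k) X := by
  rw [charVec_add]
  congr 1
  symm
  refine List.eq_replicate_iff.mpr ⟨by simp, ?_⟩
  simp only [List.mem_map, List.mem_range]
  rintro _ ⟨i, -, rfl⟩
  exact if_neg fun h => by have := hX _ h; omega

lemma replicate_zero_append_charVec (a : ℕ) {n : ℕ} {X : Finset ℕ} (hX : ∀ x ∈ X, 1 ≤ x) :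
    List.replicate a 0 ++ charVec n X = charVec (a + n) (X.image (a + ·)) := by
  rw [charVec_add]
  congr 1
  · symm
    refine List.eq_replicate_iff.mpr ⟨length_charVec a _, ?_⟩
    simp only [charVec, List.mem_map, List.mem_range, Finset.mem_image]
    rintro _ ⟨i, hi, rfl⟩
    exact if_neg fun ⟨x, hx, hxi⟩ => by have := hX x hx; omega
  · simp only [charVec, Finset.mem_image, add_assoc, add_right_inj, exists_eq_right]

lemma innerProd_charVec (n : ℕ) (X Y : Finset ℕ) :
    innerProd (charVec n X) (charVec n Y)
      = ((List.range n).map fun i => if i + 1 ∈ X ∧ i + 1 ∈ Y then 1 else 0).sum := by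
  simp only [innerProd, charVec, List.zipWith_map, List.zipWith_self, ite_zero_mul_ite_zero,
    one_mul]

lemma one_le_innerProd_charVec_iff {n : ℕ} (X : Finset ℕ) {Y : Finset ℕ}
    (hY : Y ⊆ Finset.Icc 1 n) :
    1 ≤ innerProd (charVec n X) (charVec n Y) ↔ ∃ y ∈ Y, y ∈ X := by
  rw [innerProd_charVec, one_le_list_sum_iff]
  simp only [List.mem_map, List.mem_range, exists_exists_and_eq_and, Nat.one_le_iff_ne_zero,
    ne_eq, ite_eq_right_iff, one_ne_zero, imp_false, not_not]
  constructor
  · rintro ⟨i, -, hiX, hiY⟩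
    exact ⟨i + 1, hiY, hiX⟩
  · rintro ⟨y, hy, hyX⟩
    obtain ⟨hy1, hyn⟩ := Finset.mem_Icc.mp (hY hy)
    refine ⟨y - 1, by omega, ?_⟩
    rw [Nat.sub_add_cancel hy1]
    exact ⟨hyX, hy⟩

lemma one_le_innerProd_shifted_charVec_iff {U a : ℕ} (ha : a ≤ U) {B C : Finset ℕ}
    (hB : B ⊆ Finset.Icc 1 U) (hC : C ⊆ Finset.Icc 1 U) :
    1 ≤ innerProd (List.replicate a 0 ++ charVec U B ++ List.replicate (U - a) 0)
        (charVec U C ++ List.replicate U 0)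
      ↔ ∃ b ∈ B, ∃ c ∈ C, a + b = c := by
  have hB1 : ∀ b ∈ B, 1 ≤ b := fun b hb => (Finset.mem_Icc.mp (hB hb)).1
  have hBU : ∀ y ∈ B.image (a + ·), y ≤ a + U := by
    simp only [Finset.mem_image, forall_exists_index, and_imp, forall_apply_eq_imp_iff₂]
    exact fun b hb => Nat.add_le_add_left (Finset.mem_Icc.mp (hB hb)).2 a
  have hCU : ∀ c ∈ C, c ≤ U := fun c hc => (Finset.mem_Icc.mp (hC hc)).2
  rw [replicate_zero_append_charVec a hB1, charVec_append_replicate_zero hBU,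
    charVec_append_replicate_zero hCU, show a + U + (U - a) = U + U by omega,
    one_le_innerProd_charVec_iff _ (hC.trans (Finset.Icc_subset_Icc le_rfl le_add_self))]
  simp only [Finset.mem_image]
  tauto

theorem stmt0_general (U m : ℕ)
    (a : Fin m → ℕ)
    (ha_mem : ∀ i, a i ∈ Finset.Icc 1 U)
    (B C : Finset ℕ) (hB : B ⊆ Finset.Icc 1 U) (hC : C ⊆ Finset.Icc 1 U) :
    1 ≤ innerProd
        (((List.finRange m).map (fun i =>
            List.replicate (a i) 0 ++ charVec U B ++ List.replicate (U - a i) 0)).flatten)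
        ((List.replicate m (charVec U C ++ List.replicate U 0)).flatten)
      ↔ ∃ i : Fin m, ∃ b ∈ B, ∃ c ∈ C, a i + b = c := by
  have ha_le : ∀ i, a i ≤ U := fun i => (Finset.mem_Icc.mp (ha_mem i)).2
  have hsum := innerProd_flatten_map_replicate (List.finRange m)
    (fun i => List.replicate (a i) 0 ++ charVec U B ++ List.replicate (U - a i) 0)
    (charVec U C ++ List.replicate U 0)
    (fun i _ => by
      simp only [List.length_append, List.length_replicate, length_charVec]
      have := ha_le i
      omega)
  rw [List.length_finRange] at hsum
  rw [hsum, one_le_list_sum_iff]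
  simp only [List.mem_map, List.mem_finRange, true_and, exists_exists_eq_and]
  exact exists_congr fun i => one_le_innerProd_shifted_charVec_iff (ha_le i) hB hC

/-- with `A = {a 0, …, a (m-1)}`, `B`, `C` sets of integers in `{1, …, U}`,
the inner product of `v'_{A+B} = ⋃_i 0^{a i} v_B 0^{U - a i}` and
`v'_C = (v_C 0^U)^m` is at least 1 iff there are `a ∈ A, b ∈ B, c ∈ C` with `a + b = c`. -/
theorem stmt0 (U m : ℕ) (hU : 1 ≤ U) (hm : 1 ≤ m)
    (a : Fin m → ℕ) (ha_inj : Function.Injective a)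
    (ha_mem : ∀ i, a i ∈ Finset.Icc 1 U)
    (B C : Finset ℕ) (hB : B ⊆ Finset.Icc 1 U) (hC : C ⊆ Finset.Icc 1 U) :
    1 ≤ innerProd
        (((List.finRange m).map (fun i =>
            List.replicate (a i) 0 ++ charVec U B ++ List.replicate (U - a i) 0)).flatten)
        ((List.replicate m (charVec U C ++ List.replicate U 0)).flatten)
      ↔ ∃ i : Fin m, ∃ b ∈ B, ∃ c ∈ C, a i + b = c :=
  stmt0_general U m a ha_mem B C hB hC
end

section
/- There is a constant c > 0 such that the following holds. Let k ≥ 3, let m, U ≥ 2 with k ≤ m, and let A_1, …, A_{k−1} be sets of m integers each in {1, …, U}. Then there exists an SLP over the alphabet {0,1} of size at most c·k·m·log₂ U that generates the string v'_{A_1+⋯+A_{k−1}}, defined as the concatenation, over all tuples (a_1, …, a_{k−2}) ∈ A_1 × ⋯ × A_{k−2} in lexicographic order, of the blocks 0^{a_1+⋯+a_{k−2}} ∘ v_{A_{k−1}} ∘ 0^{(k−2)U−a_1−⋯−a_{k−2}}. -/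
/-- A rule of a straight-line program: either a terminal symbol, or the ordered
pair `(j, k)` of the indices of two strictly earlier rules to be concatenated. -/
inductive SLPRule (α : Type*) where
  | sym (a : α)
  | pair (j k : ℕ)

/-- A straight-line program (SLP) over the alphabet `α`: a finite sequence of
rules, where each pair rule may only reference strictly earlier rules. -/
structure SLP (α : Type*) where
  rules : List (SLPRule α)
  wf : ∀ i : Fin rules.length, match rules.get i with
    | .sym _ => True
    | .pair j k => j < i.val ∧ k < i.val

/-- The size of an SLP is its number of rules. -/
def SLP.size {α : Type*} (G : SLP α) : ℕ := G.rules.length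

/-- The list of the strings `eval(R_1), …, eval(R_n)` generated by the
successive rules of an SLP: a symbol rule evaluates to the corresponding
one-letter string, and a pair rule `(j, k)` evaluates to the concatenation
of the evaluations of the (earlier) rules `R_j` and `R_k`. -/
def SLP.evals {α : Type*} (G : SLP α) : List (List α) :=
  G.rules.foldl (fun acc r =>
    acc ++ [match r with
      | .sym a => [a]
      | .pair j k => acc.getD j [] ++ acc.getD k []]) []

/-- An SLP generates the string which its last rule evaluates to. -/
def SLP.generates {α : Type*} (G : SLP α) (s : List α) : Prop :=
  G.evals.getLast? = some s

/-- Characteristic vector (as a binary string over the alphabet `{0,1}`) of a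
set `X ⊆ {1, …, U}`: position `i ∈ {1, …, U}` carries a `1` iff `i ∈ X`. -/
def charVec2 (U : ℕ) (X : Finset ℕ) : List (Fin 2) :=
  (List.range U).map (fun i => if i + 1 ∈ X then 1 else 0)

/-!
The target is the concatenation of the blocks `0^s v 0^(T-s)`, `T = (k-2)U`, with `s` running
through the sums of `A_1 × ⋯ × A_{k-2}` in lexicographic order. Fixing the first coordinate
`a ∈ A_1`, it is the concatenation, over `a ∈ A_1` in order, of the string for `A_2, …, A_{k-2}`
shifted right by `a`. Once the trailing zeros of the latter are split off, as `w 0^t`, consecutive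
shifted copies of `w` are separated by a single run of zeros, so each of the `k - 2` levels costs
`m` runs and `2m` concatenations. A run `0^r` costs `2 log r` rules by repeated doubling, and
`v_{A_{k-1}}` itself is `m` ones separated by runs. No run is longer than `(k-1)U ≤ U²`, because
`k ≤ m ≤ U`.
-/
namespace SLP

variable {α : Type*}

def evalRule (acc : List (List α)) : SLPRule α → List α
  | .sym a => [a]
  | .pair j k => acc.getD j [] ++ acc.getD k []

def evalsOf (rs : List (SLPRule α)) : List (List α) :=
  rs.foldl (fun acc r => acc ++ [evalRule acc r]) []

theorem evals_eq_evalsOf (G : SLP α) : G.evals = evalsOf G.rules := rfl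

theorem evalsOf_append_singleton (rs : List (SLPRule α)) (r : SLPRule α) :
    evalsOf (rs ++ [r]) = evalsOf rs ++ [evalRule (evalsOf rs) r] := by
  simp [evalsOf, List.foldl_append]

theorem length_evalsOf (rs : List (SLPRule α)) : (evalsOf rs).length = rs.length := by
  induction rs using List.reverseRecOn with
  | nil => rfl
  | append_singleton rs r ih => simp [evalsOf_append_singleton, ih]

theorem evalsOf_prefix_of_prefix {rs rs' : List (SLPRule α)} (h : rs <+: rs') :
    evalsOf rs <+: evalsOf rs' := by
  obtain ⟨t, rfl⟩ := h
  induction t using List.reverseRecOn with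
  | nil => simp
  | append_singleton t r ih =>
    rw [← List.append_assoc, evalsOf_append_singleton]
    exact ih.trans (List.prefix_append _ _)

def RulesWF (rs : List (SLPRule α)) : Prop :=
  ∀ i j k, rs[i]? = some (SLPRule.pair j k) → j < i ∧ k < i

theorem RulesWF.take {rs : List (SLPRule α)} (h : RulesWF rs) (n : ℕ) : RulesWF (rs.take n) :=
  fun i j k hi => by
    rw [List.getElem?_take] at hi
    split_ifs at hi
    exact h i j k hi

theorem RulesWF.append_singleton {rs : List (SLPRule α)} {r : SLPRule α} (h : RulesWF rs)
    (hr : ∀ j k, r = .pair j k → j < rs.length ∧ k < rs.length) : RulesWF (rs ++ [r]) := by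
  intro i j k hi
  rcases lt_or_ge i rs.length with hlt | hge
  · rw [List.getElem?_append_left hlt] at hi
    exact h i j k hi
  · rw [List.getElem?_append_right hge, List.getElem?_singleton] at hi
    split_ifs at hi
    obtain ⟨rfl⟩ := hi
    obtain rfl : i = rs.length := by omega
    exact hr j k rfl

def ofRules (rs : List (SLPRule α)) (h : RulesWF rs) : SLP α where
  rules := rs
  wf i := by
    split
    · trivial
    · next j k hi => exact h i j k (by simp [← hi])

theorem rulesWF (G : SLP α) : RulesWF G.rules := by
  intro i j k hi
  obtain ⟨hlt, hget⟩ := List.getElem?_eq_some_iff.mp hi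
  simpa only [List.get_eq_getElem, hget] using G.wf ⟨i, hlt⟩

def empty : SLP α := ofRules [] fun _ _ _ h => by simp at h

theorem size_empty : (empty : SLP α).size = 0 := rfl

/-- The empty string counts as derivable, so that runs of length zero need no special case. -/
def Derives (G : SLP α) (s : List α) : Prop := s = [] ∨ s ∈ G.evals

theorem derives_nil (G : SLP α) : G.Derives [] := .inl rfl

theorem Derives.mono {G G' : SLP α} {s : List α} (hG : G.rules <+: G'.rules)
    (hs : G.Derives s) : G'.Derives s :=
  hs.imp_right fun h => (evalsOf_prefix_of_prefix hG).subset h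

theorem Derives.exists_generates {G : SLP α} {s : List α} (h : G.Derives s) (hs : s ≠ []) :
    ∃ G' : SLP α, G'.generates s ∧ G'.size ≤ G.size := by
  obtain ⟨i, hi, rfl⟩ := List.mem_iff_getElem.mp (h.resolve_left hs)
  refine ⟨ofRules (G.rules.take (i + 1)) (G.rulesWF.take _), ?_, by simp [size, ofRules]⟩
  have hlen : i < G.rules.length := by simpa [evals_eq_evalsOf, length_evalsOf] using hi
  have htake : evalsOf (G.rules.take (i + 1)) = G.evals.take (i + 1) := by
    rw [evals_eq_evalsOf, List.prefix_iff_eq_take.mp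
      (evalsOf_prefix_of_prefix (List.take_prefix _ _)), length_evalsOf, List.length_take,
      Nat.min_eq_left hlen]
  simp [generates, evals_eq_evalsOf, ofRules, htake, List.getLast?_take]

def Builds (G : SLP α) (n : ℕ) (s : List α) : Prop :=
  ∃ G' : SLP α, G.rules <+: G'.rules ∧ G'.size ≤ G.size + n ∧ G'.Derives s

theorem Derives.builds {G : SLP α} {s : List α} (h : G.Derives s) (n : ℕ) : G.Builds n s :=
  ⟨G, List.prefix_rfl, Nat.le_add_right _ _, h⟩

theorem Builds.mono {G : SLP α} {n n' : ℕ} {s : List α} (h : G.Builds n s) (hn : n ≤ n') :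
    G.Builds n' s :=
  let ⟨G', hG', hsize, hs⟩ := h
  ⟨G', hG', by omega, hs⟩

theorem Builds.bind {G : SLP α} {n n' : ℕ} {s t : List α} (h : G.Builds n s)
    (k : ∀ G' : SLP α, G.rules <+: G'.rules → G'.Derives s → G'.Builds n' t) :
    G.Builds (n + n') t := by
  obtain ⟨G', hG', hsize, hs⟩ := h
  obtain ⟨G'', hG'', hsize', ht⟩ := k G' hG' hs
  exact ⟨G'', hG'.trans hG'', by omega, ht⟩

theorem Builds.exists_generates {G : SLP α} {n : ℕ} {s : List α} (h : G.Builds n s)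
    (hs : s ≠ []) : ∃ G' : SLP α, G'.generates s ∧ G'.size ≤ G.size + n :=
  let ⟨_, _, hsize, hG'⟩ := h
  let ⟨G'', hgen, hsize'⟩ := hG'.exists_generates hs
  ⟨G'', hgen, hsize'.trans hsize⟩

theorem builds_evalRule {G : SLP α} (r : SLPRule α) (hr : RulesWF (G.rules ++ [r])) :
    G.Builds 1 (evalRule G.evals r) := by
  refine ⟨ofRules _ hr, List.prefix_append _ _, by simp [size, ofRules], Or.inr ?_⟩
  simp [evals_eq_evalsOf, ofRules, evalsOf_append_singleton]

theorem builds_singleton (G : SLP α) (a : α) : G.Builds 1 [a] :=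
  builds_evalRule (.sym a) (G.rulesWF.append_singleton fun _ _ h => nomatch h)

theorem Derives.builds_append {G : SLP α} {s t : List α} (hs : G.Derives s)
    (ht : G.Derives t) : G.Builds 1 (s ++ t) := by
  rcases hs with rfl | hs
  · simpa using ht.builds 1
  rcases ht with rfl | ht
  · simpa using Derives.builds (.inr hs) 1
  obtain ⟨i, hi, rfl⟩ := List.mem_iff_getElem.mp hs
  obtain ⟨j, hj, rfl⟩ := List.mem_iff_getElem.mp ht
  have := builds_evalRule (G := G) (.pair i j) (G.rulesWF.append_singleton fun _ _ h => by
    cases h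
    rw [evals_eq_evalsOf, length_evalsOf] at hi hj
    exact ⟨hi, hj⟩)
  simpa [evalRule, List.getD_eq_getElem?_getD, List.getElem?_eq_getElem hi,
    List.getElem?_eq_getElem hj] using this

theorem Builds.append {G : SLP α} {n : ℕ} {s t : List α} (hs : G.Builds n s)
    (ht : G.Derives t) : G.Builds (n + 1) (s ++ t) :=
  hs.bind fun _ hG' hs' => hs'.builds_append (ht.mono hG')

theorem Builds.prepend {G : SLP α} {n : ℕ} {s t : List α} (hs : G.Builds n s)
    (ht : G.Derives t) : G.Builds (n + 1) (t ++ s) :=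
  hs.bind fun _ hG' hs' => (ht.mono hG').builds_append hs'

theorem builds_replicate {G : SLP α} {a : α} (ha : G.Derives [a]) (r : ℕ) :
    G.Builds (2 * Nat.log 2 r) (List.replicate r a) := by
  induction r using Nat.strong_induction_on with
  | _ r ih =>
  rcases Nat.lt_or_ge r 2 with hr | hr
  · interval_cases r
    · exact (derives_nil G).builds _
    · exact ha.builds _
  have hlog : Nat.log 2 r = Nat.log 2 (r / 2) + 1 := by
    rw [Nat.log_div_base, Nat.sub_add_cancel (Nat.log_pos one_lt_two hr)]
  obtain ⟨q, hq⟩ := Nat.even_or_odd' r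
  have hdouble := (ih q (by omega)).bind fun _ _ h => h.builds_append h
  rw [← List.replicate_add, ← two_mul] at hdouble
  rw [hlog, show r / 2 = q by omega]
  rcases hq with rfl | rfl
  · exact hdouble.mono (by omega)
  · have hodd := hdouble.bind fun _ hG' h => h.builds_append (ha.mono hG')
    rw [← List.replicate_succ'] at hodd
    exact hodd.mono (by omega)

end SLP

section Blocks

variable {α : Type*} (x : α)

def gapJoin (w : List α) (gs : List ℕ) : List α :=
  (gs.map fun g => List.replicate g x ++ w).flatten

def blocks (c : List α) (T : ℕ) (L : List ℕ) : List α :=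
  (L.map fun s => List.replicate s x ++ c ++ List.replicate (T - s) x).flatten

/-- The runs of `x` in front of the successive copies of `w` in `x^p ++ blocks x w t B`;
`gapTrail t p B` is the run after the last copy. -/
def gapList (t : ℕ) : ℕ → List ℕ → List ℕ
  | _, [] => []
  | p, b :: B => (p + b) :: gapList t (t - b) B

def gapTrail (t : ℕ) : ℕ → List ℕ → ℕ
  | p, [] => p
  | _, b :: B => gapTrail t (t - b) B

variable {x}

theorem blocks_append (c : List α) (T : ℕ) (L L' : List ℕ) :
    blocks x c T (L ++ L') = blocks x c T L ++ blocks x c T L' := by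
  simp [blocks]

theorem replicate_append_blocks {c : List α} {T b : ℕ} {L : List ℕ} (h : ∀ s ∈ L, b + s ≤ T) :
    List.replicate b x ++ blocks x c T L
      = blocks x c T (L.map (b + ·)) ++ List.replicate b x := by
  induction L with
  | nil => simp [blocks]
  | cons s L ih =>
    have hs : T - (b + s) + b = T - s := by have := h s (by simp); omega
    simp only [blocks, List.map_cons, List.flatten_cons, List.append_assoc] at ih ⊢
    rw [← ih fun s' hs' => h s' (by simp [hs']),
      ← List.append_assoc (List.replicate (T - (b + s)) x), ← List.replicate_add, hs,
      List.replicate_add, List.append_assoc]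

theorem blocks_flatMap_map_add {c w : List α} {T t : ℕ} {L B : List ℕ}
    (hw : blocks x c T L = w ++ List.replicate t x) (hT : ∀ b ∈ B, ∀ s ∈ L, b + s ≤ T)
    (ht : ∀ b ∈ B, b ≤ t) :
    blocks x c T (B.flatMap fun b => L.map (b + ·)) = blocks x w t B := by
  induction B with
  | nil => rfl
  | cons b B ih =>
    have hb : blocks x c T (L.map (b + ·))
        = List.replicate b x ++ w ++ List.replicate (t - b) x := by
      refine List.append_cancel_right (?_ : _ ++ List.replicate b x = _ ++ List.replicate b x)
      rw [← replicate_append_blocks (hT b (by simp)), hw, List.append_assoc, List.append_assoc,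
        ← List.replicate_add, Nat.sub_add_cancel (ht b (by simp))]
    rw [List.flatMap_cons, blocks_append, hb, ih (fun b' hb' => hT b' (by simp [hb']))
      (fun b' hb' => ht b' (by simp [hb']))]
    simp [blocks]

theorem replicate_append_blocks_eq_gapJoin (w : List α) (t p : ℕ) (B : List ℕ) :
    List.replicate p x ++ blocks x w t B
      = gapJoin x w (gapList t p B) ++ List.replicate (gapTrail t p B) x := by
  induction B generalizing p with
  | nil => simp [blocks, gapJoin, gapList, gapTrail]
  | cons b B ih =>
    have := ih (t - b)
    simp only [blocks, gapJoin, gapList, gapTrail, List.map_cons, List.flatten_cons,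
      List.append_assoc] at this ⊢
    rw [← this, List.replicate_add, List.append_assoc]

theorem length_gapList (t p : ℕ) (B : List ℕ) : (gapList t p B).length = B.length := by
  induction B generalizing p <;> simp_all [gapList]

theorem gapList_le {t p s : ℕ} {B : List ℕ} (hp : p ≤ t) (hB : ∀ b ∈ B, b ≤ s) :
    ∀ g ∈ gapList t p B, g ≤ t + s := by
  induction B generalizing p with
  | nil => simp [gapList]
  | cons b B ih =>
    simp only [gapList, List.mem_cons]
    rintro g (rfl | hg)
    · have := hB b (by simp); omega
    · exact ih (by omega) (fun b' hb' => hB b' (by simp [hb'])) g hg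

theorem gapTrail_le {t p : ℕ} (hp : p ≤ t) (B : List ℕ) : gapTrail t p B ≤ t := by
  induction B generalizing p with
  | nil => exact hp
  | cons b B ih => exact ih (by omega)

theorem min_le_gapTrail {t s : ℕ} (p : ℕ) {B : List ℕ} (hB : ∀ b ∈ B, b ≤ s) :
    min p (t - s) ≤ gapTrail t p B := by
  induction B generalizing p with
  | nil => exact min_le_left _ _
  | cons b B ih =>
    have := ih (t - b) (fun b' hb' => hB b' (by simp [hb']))
    have := hB b (by simp)
    simp only [gapTrail]
    omega

theorem sub_le_gapTrail {t s : ℕ} (p : ℕ) {B : List ℕ} (hB : ∀ b ∈ B, b ≤ s) (hne : B ≠ []) :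
    t - s ≤ gapTrail t p B := by
  obtain ⟨b, B, rfl⟩ := List.exists_cons_of_ne_nil hne
  have := min_le_gapTrail (t := t) (t - b) fun b' hb' => hB b' (List.mem_cons_of_mem _ hb')
  have := hB b List.mem_cons_self
  simp only [gapTrail]
  omega

theorem SLP.builds_gapJoin {G : SLP α} (hx : G.Derives [x]) {w : List α} (hw : G.Derives w)
    {N : ℕ} {gs : List ℕ} (hgs : ∀ g ∈ gs, g ≤ N) :
    G.Builds (gs.length * (2 * Nat.log 2 N + 2)) (gapJoin x w gs) := by
  induction gs with
  | nil => exact (derives_nil G).builds _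
  | cons g gs ih =>
    have hblock := (ih fun g' hg' => hgs g' (by simp [hg'])).bind fun _ hG' hrest =>
      ((builds_replicate (hx.mono hG') g).append (hw.mono hG')).append hrest
    refine hblock.mono ?_
    have := Nat.log_mono_right (b := 2) (hgs g (by simp))
    rw [List.length_cons, add_one_mul]
    omega

end Blocks

theorem charVec2_empty (n : ℕ) : charVec2 n ∅ = List.replicate n 0 := by
  simp [charVec2, List.map_const']

theorem charVec2_add (n d : ℕ) (X : Finset ℕ) :
    charVec2 (n + d) X
      = charVec2 n X ++ (List.range d).map fun i => if n + i + 1 ∈ X then 1 else 0 := by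
  simp [charVec2, List.range_add, Function.comp_def]

theorem charVec2_insert_of_forall_lt {n y : ℕ} {X : Finset ℕ} (hy : 1 ≤ y) (hyn : y ≤ n)
    (hX : ∀ x ∈ X, x < y) :
    charVec2 n (insert y X) = charVec2 (y - 1) X ++ [1] ++ List.replicate (n - y) 0 := by
  obtain ⟨d, rfl⟩ := Nat.exists_eq_add_of_le hyn
  obtain ⟨y, rfl⟩ := Nat.exists_eq_add_of_le' hy
  have hprefix : charVec2 y (insert (y + 1) X) = charVec2 y X :=
    List.map_congr_left fun i hi => by
      simp only [List.mem_range] at hi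
      simp [show i ≠ y by omega]
  have hsuffix : ((List.range d).map fun i =>
      if y + 1 + i + 1 ∈ insert (y + 1) X then (1 : Fin 2) else 0) = List.replicate d 0 := by
    refine List.eq_replicate_iff.mpr ⟨by simp, fun b hb => ?_⟩
    obtain ⟨i, -, rfl⟩ := List.mem_map.mp hb
    have : y + 1 + i + 1 ∉ X := fun h => by have := hX _ h; omega
    simp [this, show y + 1 + i ≠ y by omega]
  rw [charVec2_add, charVec2_add y 1, hprefix, hsuffix]
  simp

open Finset in
theorem SLP.builds_charVec2 {G : SLP (Fin 2)} (h0 : G.Derives [0]) (h1 : G.Derives [1])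
    (X : Finset ℕ) : ∀ n, X ⊆ Icc 1 n →
      G.Builds (#X * (2 * Nat.log 2 n + 2) + 2 * Nat.log 2 n) (charVec2 n X) := by
  induction X using Finset.induction_on_max with
  | empty => intro n _; simpa [charVec2_empty] using builds_replicate h0 n
  | insert y X hlt ih =>
    intro n hX
    have hy := mem_Icc.mp (hX (mem_insert_self y X))
    have hXy : X ⊆ Icc 1 (y - 1) := fun x hx => by
      have := mem_Icc.mp (hX (mem_insert_of_mem hx))
      have := hlt x hx
      rw [mem_Icc]
      omega
    rw [charVec2_insert_of_forall_lt hy.1 hy.2 hlt,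
      card_insert_of_notMem fun h => (hlt y h).false]
    refine (((ih (y - 1) hXy).append h1).bind fun _ hG' h =>
      (builds_replicate (h0.mono hG') (n - y)).prepend h).mono ?_
    have := Nat.log_mono_right (b := 2) (show y - 1 ≤ n by omega)
    have := Nat.log_mono_right (b := 2) (show n - y ≤ n by omega)
    have := Nat.mul_le_mul_left #X
      (show 2 * Nat.log 2 (y - 1) + 2 ≤ 2 * Nat.log 2 n + 2 by omega)
    rw [add_one_mul]
    omega

theorem List.range_mul_eq_flatMap (m n : ℕ) :
    List.range (m * n) = (List.range m).flatMap fun q => (List.range n).map (q * n + ·) := by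
  induction m with
  | zero => simp
  | succ m ih => rw [add_one_mul, List.range_add, ih, List.range_succ, List.flatMap_append]; simp

theorem Nat.mul_pow_add_div_pow_mod {m e q r : ℕ} (hq : q < m) (hr : r < m ^ e) :
    (q * m ^ e + r) / m ^ e % m = q := by
  have hpos : 0 < m ^ e := Nat.zero_lt_of_lt hr
  rw [add_comm, Nat.add_mul_div_right _ _ hpos, Nat.div_eq_of_lt hr, zero_add,
    Nat.mod_eq_of_lt hq]

theorem Nat.mul_pow_add_div_pow_mod_of_lt {m e d : ℕ} (q r : ℕ) (hd : d < e) :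
    (q * m ^ e + r) / m ^ (e - 1 - d) % m = r / m ^ (e - 1 - d) % m := by
  rcases Nat.eq_zero_or_pos (m ^ (e - 1 - d)) with h | h
  · simp [h]
  have : q * m ^ e + r = r + q * m ^ d * m * m ^ (e - 1 - d) := by
    obtain ⟨k, rfl⟩ : ∃ k, e = d + 1 + k := ⟨e - 1 - d, by omega⟩
    rw [show d + 1 + k - 1 - d = k by omega]
    ring
  rw [this, Nat.add_mul_div_right _ _ h, Nat.add_mul_mod_self_right]

def tupleSums (m : ℕ) : ℕ → (ℕ → ℕ → ℕ) → List ℕ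
  | 0, _ => [0]
  | e + 1, a => (List.range m).flatMap fun q => (tupleSums m e fun i => a (i + 1)).map (a 0 q + ·)

theorem tupleSums_eq_map_range (m e : ℕ) (a : ℕ → ℕ → ℕ) :
    tupleSums m e a = (List.range (m ^ e)).map
      fun j => ∑ d ∈ Finset.range e, a d (j / m ^ (e - 1 - d) % m) := by
  induction e generalizing a with
  | zero => simp [tupleSums]
  | succ e ih =>
    rw [tupleSums, pow_succ', List.range_mul_eq_flatMap, List.map_flatMap]
    refine List.flatMap_congr fun q hq => ?_
    rw [ih, List.map_map, List.map_map]
    refine List.map_congr_left fun r hr => ?_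
    rw [List.mem_range] at hq hr
    simp only [Function.comp, Finset.sum_range_succ', Nat.sub_zero, add_tsub_cancel_right,
      Nat.mul_pow_add_div_pow_mod hq hr]
    rw [add_comm]
    congr 1
    refine Finset.sum_congr rfl fun d hd => ?_
    rw [Finset.mem_range] at hd
    rw [show e - (d + 1) = e - 1 - d by omega, Nat.mul_pow_add_div_pow_mod_of_lt q r hd]

theorem tupleSums_le {m U : ℕ} {a : ℕ → ℕ → ℕ} (e : ℕ) (ha : ∀ d < e, ∀ q < m, a d q ≤ U) :
    ∀ s ∈ tupleSums m e a, s ≤ e * U := by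
  induction e generalizing a with
  | zero => simp [tupleSums]
  | succ e ih =>
    simp only [tupleSums, List.mem_flatMap, List.mem_range, List.mem_map]
    rintro _ ⟨q, hq, s, hs, rfl⟩
    have := ih (fun d hd q hq => ha (d + 1) (by omega) q hq) s hs
    have := ha 0 (by omega) q hq
    rw [add_one_mul]
    omega

theorem exists_blocks_tupleSums_eq_append_replicate {α : Type*} (x : α) (c : List α)
    {m U T : ℕ} (hm : 0 < m) (e : ℕ) (a : ℕ → ℕ → ℕ) (ha : ∀ d < e, ∀ q < m, a d q ≤ U)
    (heT : e * U ≤ T) :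
    ∃ w t, T - e * U ≤ t ∧ t ≤ T ∧ blocks x c T (tupleSums m e a) = w ++ List.replicate t x ∧
      ∀ G : SLP α, G.Derives [x] → G.Derives c →
        G.Builds (e * (m * (2 * Nat.log 2 (T + U) + 2))) w := by
  induction e generalizing a with
  | zero =>
    refine ⟨c, T, by omega, le_rfl, by simp [blocks, tupleSums], fun G _ hc => ?_⟩
    simpa using hc.builds 0
  | succ e ih =>
    rw [add_one_mul] at heT ⊢
    obtain ⟨w, t, ht, htT, hw, hbuild⟩ :=
      ih (fun i => a (i + 1)) (fun d hd q hq => ha (d + 1) (by omega) q hq) (by omega)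
    have hL := tupleSums_le e (a := fun i => a (i + 1)) fun d hd q hq => ha (d + 1) (by omega) q hq
    set B := (List.range m).map (a 0)
    have hB : ∀ b ∈ B, b ≤ U := by
      simp only [B, List.mem_map, List.mem_range]
      rintro _ ⟨q, hq, rfl⟩
      exact ha 0 (by omega) q hq
    have hsplit : blocks x c T (tupleSums m (e + 1) a)
        = gapJoin x w (gapList t 0 B) ++ List.replicate (gapTrail t 0 B) x := by
      rw [← replicate_append_blocks_eq_gapJoin, List.replicate_zero, List.nil_append,
        ← blocks_flatMap_map_add hw, tupleSums, List.flatMap_map]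
      · intro b hb s hs
        have := hB b hb
        have := hL s hs
        omega
      · intro b hb
        have := hB b hb
        omega
    have htrail := sub_le_gapTrail (t := t) 0 hB (by simp [B]; omega)
    refine ⟨_, _, by omega, (gapTrail_le (Nat.zero_le _) B).trans htT, hsplit, fun G hx hc => ?_⟩
    refine ((hbuild G hx hc).bind fun _ hG' hw' =>
      SLP.builds_gapJoin (N := T + U) (hx.mono hG') hw' fun g hg => ?_).mono ?_
    · have := gapList_le (Nat.zero_le t) hB g hg
      omega
    · rw [length_gapList, List.length_map, List.length_range, add_one_mul]

theorem two_mul_natLog_add_two_le {N U : ℕ} (hU : 2 ≤ U) (hN : N ≤ U * U) :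
    (2 * Nat.log 2 N + 2 : ℝ) ≤ 6 * Real.logb 2 U := by
  have hU' : (2 : ℝ) ≤ U := by exact_mod_cast hU
  have hone : 1 ≤ Real.logb 2 U := by
    simpa using Real.logb_le_logb_of_le (b := 2) (by norm_num) (by norm_num) hU'
  have hlog : (Nat.log 2 N : ℝ) ≤ 2 * Real.logb 2 U :=
    calc (Nat.log 2 N : ℝ) ≤ Nat.log 2 (U * U) := by exact_mod_cast Nat.log_mono_right hN
      _ ≤ Real.logb 2 (U * U : ℕ) := Real.natLog_le_logb _ _
      _ = 2 * Real.logb 2 U := by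
        push_cast
        rw [Real.logb_mul (by positivity) (by positivity)]
        ring
  linarith

open Finset in
theorem builds_blocks_tupleSums_charVec2 {k m U : ℕ} (hk : 2 ≤ k) (hm : 3 ≤ m)
    (a : ℕ → ℕ → ℕ) (ha : ∀ i < k - 2, ∀ j < m, a i j ≤ U)
    (hC : (range m).image (a (k - 2)) ⊆ Icc 1 U) :
    (SLP.empty : SLP (Fin 2)).Builds (k * m * (2 * Nat.log 2 ((k - 2) * U + U) + 2))
      (blocks 0 (charVec2 U ((range m).image (a (k - 2)))) ((k - 2) * U)
        (tupleSums m (k - 2) a)) := by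
  obtain ⟨w, t, -, htT, hv, hw⟩ := exists_blocks_tupleSums_eq_append_replicate (0 : Fin 2)
    (charVec2 U ((range m).image (a (k - 2)))) (by omega) (k - 2) a ha le_rfl
  rw [hv]
  refine ((SLP.builds_singleton _ 0).bind fun G₀ _ h₀ =>
    (SLP.builds_singleton G₀ 1).bind fun G₁ hG₁ h₁ =>
    (SLP.builds_charVec2 (h₀.mono hG₁) h₁ _ U hC).bind fun G₂ hG₂ hC₂ =>
    (hw G₂ ((h₀.mono hG₁).mono hG₂) hC₂).bind fun G₃ hG₃ hw₃ =>
    (SLP.builds_replicate (((h₀.mono hG₁).mono hG₂).mono hG₃) t).prepend hw₃).mono ?_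
  set B := 2 * Nat.log 2 ((k - 2) * U + U) + 2
  have := Nat.log_mono_right (b := 2) (show U ≤ (k - 2) * U + U by omega)
  have := Nat.log_mono_right (b := 2) (show t ≤ (k - 2) * U + U by omega)
  have hcard : #((range m).image (a (k - 2))) ≤ m := card_image_le.trans (card_range m).le
  have := Nat.mul_le_mul hcard (show 2 * Nat.log 2 U + 2 ≤ B by omega)
  have := Nat.mul_le_mul_right B hm
  have hkmB : k * m * B = (k - 2) * (m * B) + 2 * (m * B) := by
    obtain ⟨k, rfl⟩ := Nat.exists_eq_add_of_le' hk
    rw [Nat.add_sub_cancel]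
    ring
  omega

/-- there is a constant `c > 0` such that for all `k ≥ 3`,
`m, U ≥ 2` with `k ≤ m`, and all sets `A_1, …, A_{k-1}` of `m` integers in
`{1, …, U}` (given 0-indexed by sorted enumerations `a i`, `i ≤ k-2`), there is
an SLP over `{0,1}` of size at most `c · k · m · log₂ U` generating
`v'_{A_1+⋯+A_{k-1}} = ⋃_{(a_1,…,a_{k-2}) lex} 0^{Σ} v_{A_{k-1}} 0^{(k-2)U - Σ}`. -/
theorem stmt3 :
    ∃ c : ℝ, 0 < c ∧
      ∀ k m U : ℕ, 3 ≤ k → 2 ≤ m → 2 ≤ U → k ≤ m →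
      ∀ a : ℕ → ℕ → ℕ,
        (∀ i ≤ k - 2, ∀ j j' : ℕ, j < j' → j' < m → a i j < a i j') →
        (∀ i ≤ k - 2, ∀ j < m, a i j ∈ Finset.Icc 1 U) →
        -- sum of the tuple of `A_1 × ⋯ × A_{k-2}` encoded, in lexicographic
        -- order, by the block index `j < m^(k-2)`
        let S : ℕ → ℕ := fun j =>
          ∑ d ∈ Finset.range (k - 2), a d (j / m ^ (k - 2 - 1 - d) % m)
        let v : List (Fin 2) := ((List.range (m ^ (k - 2))).map (fun j =>
          List.replicate (S j) 0
            ++ charVec2 U (Finset.image (a (k - 2)) (Finset.range m))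
            ++ List.replicate ((k - 2) * U - S j) 0)).flatten
        ∃ G : SLP (Fin 2), G.generates v ∧
          (G.size : ℝ) ≤ c * k * m * Real.logb 2 U := by
  refine ⟨6, by norm_num, fun k m U hk hm hU hkm a hmono hmem => ?_⟩
  intro S v
  have hv : v = blocks 0 (charVec2 U ((Finset.range m).image (a (k - 2)))) ((k - 2) * U)
      (tupleSums m (k - 2) a) := by
    simp only [v, S, blocks, tupleSums_eq_map_range, List.map_map]
    rfl
  have hne : v ≠ [] := by
    simpa [v, charVec2] using ⟨0, pow_pos (by omega) _, fun _ _ => by omega⟩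
  have hC : (Finset.range m).image (a (k - 2)) ⊆ Finset.Icc 1 U := by
    simp only [Finset.subset_iff, Finset.mem_image, Finset.mem_range]
    rintro _ ⟨j, hj, rfl⟩
    exact hmem _ le_rfl j hj
  have hmU : m ≤ U := by
    have hinj : StrictMonoOn (a (k - 2)) (Finset.range m) := fun j _ j' hj' h =>
      hmono _ le_rfl j j' h (Finset.mem_range.mp hj')
    simpa [Finset.card_image_of_injOn hinj.injOn] using Finset.card_le_card hC
  obtain ⟨G, hgen, hsize⟩ := (builds_blocks_tupleSums_charVec2 (by omega) (by omega) a
    (fun i hi j hj => (Finset.mem_Icc.mp (hmem i hi.le j hj)).2) hC).exists_generates (hv ▸ hne)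
  rw [SLP.size_empty, zero_add] at hsize
  have hN : (k - 2) * U + U ≤ U * U := by
    simpa [add_one_mul] using Nat.mul_le_mul_right U (show k - 2 + 1 ≤ U by omega)
  refine ⟨G, hv ▸ hgen, ?_⟩
  calc (G.size : ℝ) ≤ k * m * (2 * Nat.log 2 ((k - 2) * U + U) + 2 : ℕ) := by exact_mod_cast hsize
    _ ≤ k * m * (6 * Real.logb 2 U) := by
      gcongr
      exact_mod_cast two_mul_natLog_add_two_le hU hN
    _ = 6 * k * m * Real.logb 2 U := by ring
end

section
/- Let U ≥ 1, s ≥ 1, let A, B, C ⊆ {−U, …, U} be sets of at most s integers each such that no a ∈ A, b ∈ B, c ∈ C satisfy a + b + c = 0, and let U' ≥ 2. Let P be the set of prime numbers in {2, …, U'} and suppose |P| ≥ 2·s³·log₂(3U). Then the number of primes p ∈ P for which there exist a ∈ A, b ∈ B, c ∈ C with a + b + c ≡ 0 (mod p) is at most |P|/2. -/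
lemma aux_card_pf (m N : ℕ) (hm : 1 ≤ m) (hmN : m ≤ N) :
    (m.primeFactors.card : ℝ) ≤ Real.logb 2 N := by
  have h2 : 2 ^ m.primeFactors.card ≤ m := by
    calc 2 ^ m.primeFactors.card ≤ ∏ p ∈ m.primeFactors, p :=
          Finset.pow_card_le_prod _ _ _ (fun p hp => (Nat.prime_of_mem_primeFactors hp).two_le)
      _ ≤ m := Nat.le_of_dvd hm (Nat.prod_primeFactors_dvd m)
  have h3 : (2:ℝ) ^ (m.primeFactors.card : ℝ) ≤ (N : ℝ) := by
    rw [Real.rpow_natCast]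
    exact_mod_cast h2.trans hmN
  have hN : (0:ℝ) < N := by exact_mod_cast hm.trans hmN
  exact (Real.le_logb_iff_rpow_le one_lt_two hN).mpr h3

/-- let `A, B, C ⊆ {-U, …, U}` have at most `s` elements each with
no `a ∈ A, b ∈ B, c ∈ C` satisfying `a + b + c = 0`, and let `P` be the set of
primes in `{2, …, U'}` with `|P| ≥ 2·s³·log₂(3U)`. Then the number of primes
`p ∈ P` for which some `a ∈ A, b ∈ B, c ∈ C` satisfy `a + b + c ≡ 0 (mod p)`
is at most `|P|/2`. -/
theorem stmt10 (U s U' : ℕ) (hU : 1 ≤ U) (hs : 1 ≤ s) (hU' : 2 ≤ U')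
    (A B C : Finset ℤ)
    (hAcard : A.card ≤ s) (hBcard : B.card ≤ s) (hCcard : C.card ≤ s)
    (hA : ∀ x ∈ A, x ∈ Finset.Icc (-(U : ℤ)) (U : ℤ))
    (hB : ∀ x ∈ B, x ∈ Finset.Icc (-(U : ℤ)) (U : ℤ))
    (hC : ∀ x ∈ C, x ∈ Finset.Icc (-(U : ℤ)) (U : ℤ))
    (hno : ∀ a ∈ A, ∀ b ∈ B, ∀ c ∈ C, a + b + c ≠ 0)
    (hP : 2 * (s : ℝ) ^ 3 * Real.logb 2 (3 * U) ≤
      (((Finset.Icc 2 U').filter Nat.Prime).card : ℝ)) :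
    ((((Finset.Icc 2 U').filter Nat.Prime).filter
        (fun (p : ℕ) => ∃ a ∈ A, ∃ b ∈ B, ∃ c ∈ C, (p : ℤ) ∣ a + b + c)).card : ℝ) ≤
      (((Finset.Icc 2 U').filter Nat.Prime).card : ℝ) / 2 := by
  set P := (Finset.Icc 2 U').filter Nat.Prime with hPdef
  set Bad := P.filter (fun (p : ℕ) => ∃ a ∈ A, ∃ b ∈ B, ∃ c ∈ C, (p : ℤ) ∣ a + b + c) with hBad
  have hsub : Bad ⊆ (A ×ˢ B ×ˢ C).biUnion
      (fun t => (t.1 + t.2.1 + t.2.2).natAbs.primeFactors) := by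
    intro p hp
    rw [hBad, Finset.mem_filter] at hp
    obtain ⟨hpP, a, ha, b, hb, c, hc, hdvd⟩ := hp
    have hpprime : p.Prime := (Finset.mem_filter.mp hpP).2
    rw [Finset.mem_biUnion]
    refine ⟨(a, b, c), ?_, ?_⟩
    · simp [Finset.mem_product, ha, hb, hc]
    · rw [Nat.mem_primeFactors]
      refine ⟨hpprime, ?_, ?_⟩
      · have := Int.natAbs_dvd_natAbs.mpr hdvd
        simpa using this
      · simp only [ne_eq, Int.natAbs_eq_zero]
        exact hno a ha b hb c hc
  have hterm : ∀ t ∈ A ×ˢ B ×ˢ C,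
      (((t.1 + t.2.1 + t.2.2).natAbs.primeFactors.card : ℝ)) ≤ Real.logb 2 (3 * U) := by
    rintro ⟨a, b, c⟩ ht
    rw [Finset.mem_product, Finset.mem_product] at ht
    obtain ⟨ha, hb, hc⟩ := ht
    have h1 : 1 ≤ (a + b + c).natAbs := by
      rw [Nat.one_le_iff_ne_zero, ne_eq, Int.natAbs_eq_zero]
      exact hno a ha b hb c hc
    have h2 : (a + b + c).natAbs ≤ 3 * U := by
      have ha' := Finset.mem_Icc.mp (hA a ha)
      have hb' := Finset.mem_Icc.mp (hB b hb)
      have hc' := Finset.mem_Icc.mp (hC c hc)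
      omega
    have := aux_card_pf (a + b + c).natAbs (3 * U) h1 h2
    simpa using this
  have hL0 : (0:ℝ) ≤ Real.logb 2 (3 * U) := by
    apply Real.logb_nonneg one_lt_two
    have : (1:ℝ) ≤ (U:ℝ) := by exact_mod_cast hU
    nlinarith
  have hcard : (Bad.card : ℝ) ≤ (s : ℝ) ^ 3 * Real.logb 2 (3 * U) := by
    calc (Bad.card : ℝ) ≤ (((A ×ˢ B ×ˢ C).biUnion
          (fun t => (t.1 + t.2.1 + t.2.2).natAbs.primeFactors)).card : ℝ) := by
          exact_mod_cast Finset.card_le_card hsub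
      _ ≤ ((∑ t ∈ A ×ˢ B ×ˢ C, (t.1 + t.2.1 + t.2.2).natAbs.primeFactors.card : ℕ) : ℝ) := by
          exact_mod_cast Finset.card_biUnion_le
      _ = ∑ t ∈ A ×ˢ B ×ˢ C, ((t.1 + t.2.1 + t.2.2).natAbs.primeFactors.card : ℝ) := by
          push_cast; ring
      _ ≤ ∑ _t ∈ A ×ˢ B ×ˢ C, Real.logb 2 (3 * U) := Finset.sum_le_sum hterm
      _ = ((A ×ˢ B ×ˢ C).card : ℝ) * Real.logb 2 (3 * U) := by
          rw [Finset.sum_const, nsmul_eq_mul]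
      _ ≤ (s : ℝ) ^ 3 * Real.logb 2 (3 * U) := by
          apply mul_le_mul_of_nonneg_right _ hL0
          have : (A ×ˢ B ×ˢ C).card ≤ s ^ 3 := by
            rw [Finset.card_product, Finset.card_product]
            calc A.card * (B.card * C.card) ≤ s * (s * s) := by
                  exact Nat.mul_le_mul hAcard (Nat.mul_le_mul hBcard hCcard)
              _ = s ^ 3 := by ring
          exact_mod_cast this
  rw [hPdef] at hP ⊢
  linarith
end

section
/- Let ℓ ≥ 1 and let C' = A'B' be the (2^ℓ × 2^ℓ·2ℓ) matrix defined as follows: rows of A' are indexed by x ∈ {0,1}^ℓ in lexicographic order with A'[x, j] = x_j for 1 ≤ j ≤ ℓ and A'[x, j] = 1 for ℓ < j ≤ 2ℓ; columns of B' are indexed by (y, k) ∈ {0,1}^ℓ × {1, …, 2ℓ} in lexicographic order with B'[i,(y,k)] = 1 if i = k ≤ ℓ, B'[i,(y,k)] = y_{k−ℓ} if i = k > ℓ, and B'[i,(y,k)] = 0 otherwise. Then the binary string of length 2^{2ℓ}·2ℓ obtained by reading the entries of C' row by row (within each row, in the lexicographic order of column indices (y, k)) contains every binary string w ∈ {0,1}^{2ℓ}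 as a contiguous substring; in fact, for every x, y ∈ {0,1}^ℓ the string x ∘ y occurs as the contiguous block of positions (y,1), …, (y,2ℓ) of row x. -/
/-!
Row `x` of `A'` is `x` followed by `ℓ` ones, and `B'` is diagonal in `k` within each column
block `y`, with diagonal `1^ℓ ∘ y`; so the `(y, ·)` block of row `x` of `A'B'` is the
entrywise product `x ∘ y`. Every binary word of length `2ℓ` is such an `x ∘ y`, and each
block is a contiguous piece of the row-by-row reading of `A'B'`.
-/

/-- The `j`-th bit (0-indexed, most significant bit first) of the `ℓ`-bit
binary representation of `x`. -/
def bitOf (ℓ x j : ℕ) : ℕ := x / 2 ^ (ℓ - 1 - j) % 2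

lemma bitOf_mul_two_pow_add_zero {ℓ b x : ℕ} (hb : b ≤ 1) (hx : x < 2 ^ ℓ) :
    bitOf (ℓ + 1) (b * 2 ^ ℓ + x) 0 = b := by
  rw [bitOf, Nat.add_sub_cancel, Nat.sub_zero, mul_comm, Nat.mul_add_div (by positivity),
    Nat.div_eq_of_lt hx, Nat.add_zero, Nat.mod_eq_of_lt (by omega)]

lemma bitOf_mul_two_pow_add_succ {ℓ j : ℕ} (b x : ℕ) (hj : j < ℓ) :
    bitOf (ℓ + 1) (b * 2 ^ ℓ + x) (j + 1) = bitOf ℓ x j := by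
  have hexp : ℓ + 1 - 1 - (j + 1) = ℓ - 1 - j := by omega
  have hpow : b * 2 ^ ℓ = 2 ^ (ℓ - 1 - j) * (b * 2 ^ j * 2) := by
    rw [show 2 ^ ℓ = 2 ^ (ℓ - 1 - j) * 2 ^ j * 2 by rw [← pow_add, ← pow_succ]; congr 1; omega]
    ring
  rw [bitOf, bitOf, hexp, hpow, Nat.mul_add_div (by positivity), Nat.add_comm,
    Nat.add_mul_mod_self_right]

lemma exists_lt_two_pow_map_bitOf_eq :
    ∀ w : List ℕ, (∀ b ∈ w, b ≤ 1) →
      ∃ x < 2 ^ w.length, (List.range w.length).map (bitOf w.length x) = w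
  | [], _ => ⟨0, by simp⟩
  | b :: w, hw => by
    obtain ⟨x, hx, hxw⟩ := exists_lt_two_pow_map_bitOf_eq w fun c hc => hw c (by simp [hc])
    have hb : b ≤ 1 := hw b (by simp)
    refine ⟨b * 2 ^ w.length + x, ?_, ?_⟩
    · rw [List.length_cons, pow_succ]
      nlinarith
    · rw [List.length_cons, List.range_succ_eq_map, List.map_cons, List.map_map,
        bitOf_mul_two_pow_add_zero hb hx]
      conv_rhs => rw [← hxw]
      congr 1
      exact List.map_congr_left fun j hj =>
        bitOf_mul_two_pow_add_succ b x (List.mem_range.mp hj)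

lemma exists_map_bitOf_append_eq (ℓ : ℕ) (w : List ℕ) (hw : w.length = 2 * ℓ)
    (hbin : ∀ b ∈ w, b ≤ 1) :
    ∃ x y : Fin (2 ^ ℓ),
      (List.range ℓ).map (bitOf ℓ x) ++ (List.range ℓ).map (bitOf ℓ y) = w := by
  have htake : (w.take ℓ).length = ℓ := by simp [hw]; omega
  have hdrop : (w.drop ℓ).length = ℓ := by simp [hw]; omega
  obtain ⟨x, hx, hxw⟩ := exists_lt_two_pow_map_bitOf_eq (w.take ℓ)
    fun b hb => hbin b (List.mem_of_mem_take hb)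
  obtain ⟨y, hy, hyw⟩ := exists_lt_two_pow_map_bitOf_eq (w.drop ℓ)
    fun b hb => hbin b (List.mem_of_mem_drop hb)
  rw [htake] at hx hxw
  rw [hdrop] at hy hyw
  exact ⟨⟨x, hx⟩, ⟨y, hy⟩, by rw [hxw, hyw, List.take_append_drop]⟩

section Construction

variable (ℓ : ℕ)

def bitsThenOnes : Matrix (Fin (2 ^ ℓ)) (Fin (2 * ℓ)) ℕ :=
  fun x j => if (j : ℕ) < ℓ then bitOf ℓ x j else 1

def onesThenBitsDiag : Matrix (Fin (2 * ℓ)) (Fin (2 ^ ℓ) × Fin (2 * ℓ)) ℕ :=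
  fun i yk => if (i : ℕ) = (yk.2 : ℕ) then
      (if (yk.2 : ℕ) < ℓ then 1 else bitOf ℓ yk.1 ((yk.2 : ℕ) - ℓ))
    else 0

variable {ℓ}

lemma bitsThenOnes_mul_onesThenBitsDiag_apply (x y : Fin (2 ^ ℓ)) (k : Fin (2 * ℓ)) :
    (bitsThenOnes ℓ * onesThenBitsDiag ℓ) x (y, k) =
      if (k : ℕ) < ℓ then bitOf ℓ x k else bitOf ℓ y ((k : ℕ) - ℓ) := by
  rw [Matrix.mul_apply, Finset.sum_eq_single k]
  · simp only [bitsThenOnes, onesThenBitsDiag]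
    split <;> simp
  · intro i _ hik
    simp [onesThenBitsDiag, Fin.val_ne_of_ne hik]
  · simp

lemma map_bitsThenOnes_mul_onesThenBitsDiag (x y : Fin (2 ^ ℓ)) :
    (List.finRange (2 * ℓ)).map (fun k => (bitsThenOnes ℓ * onesThenBitsDiag ℓ) x (y, k)) =
      (List.range ℓ).map (bitOf ℓ x) ++ (List.range ℓ).map (bitOf ℓ y) := by
  refine List.ext_getElem (by simp [two_mul]) fun n hn _ => ?_
  simp only [List.getElem_map, List.getElem_finRange, Fin.cast_mk,
    bitsThenOnes_mul_onesThenBitsDiag_apply]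
  rcases lt_or_ge n ℓ with h | h
  · rw [if_pos h, List.getElem_append_left (by simpa using h)]
    simp
  · rw [if_neg (not_lt.mpr h), List.getElem_append_right (by simpa using h)]
    simp

end Construction

theorem stmt12_general (ℓ : ℕ) :
    let A' : Matrix (Fin (2 ^ ℓ)) (Fin (2 * ℓ)) ℕ :=
      fun x j => if (j : ℕ) < ℓ then bitOf ℓ x j else 1
    let B' : Matrix (Fin (2 * ℓ)) (Fin (2 ^ ℓ) × Fin (2 * ℓ)) ℕ :=
      fun i yk => if (i : ℕ) = (yk.2 : ℕ) then
          (if (yk.2 : ℕ) < ℓ then 1 else bitOf ℓ yk.1 ((yk.2 : ℕ) - ℓ))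
        else 0
    -- the entries of `C' = A'B'` read row by row (columns `(y,k)` in
    -- lexicographic order within each row)
    let rowStr : List ℕ :=
      ((List.finRange (2 ^ ℓ)).map (fun x =>
        ((List.finRange (2 ^ ℓ)).map (fun y =>
          (List.finRange (2 * ℓ)).map (fun k => (A' * B') x (y, k)))).flatten)).flatten
    (∀ w : List ℕ, w.length = 2 * ℓ → (∀ b ∈ w, b = 0 ∨ b = 1) → w <:+: rowStr) ∧
    ∀ x y : Fin (2 ^ ℓ),
      ((List.finRange (2 * ℓ)).map (fun k => (A' * B') x (y, k))) =
        (List.range ℓ).map (bitOf ℓ x) ++ (List.range ℓ).map (bitOf ℓ y) := by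
  intro A' B' rowStr
  -- `A'` and `B'` unfold to `bitsThenOnes ℓ` and `onesThenBitsDiag ℓ`.
  refine ⟨fun w hw hbin => ?_, map_bitsThenOnes_mul_onesThenBitsDiag⟩
  obtain ⟨x, y, rfl⟩ := exists_map_bitOf_append_eq ℓ w hw fun b hb => by
    rcases hbin b hb with h | h <;> omega
  rw [← map_bitsThenOnes_mul_onesThenBitsDiag x y]
  exact .trans (List.infix_of_mem_flatten (List.mem_map.2 ⟨y, List.mem_finRange y, rfl⟩))
    (List.infix_of_mem_flatten (List.mem_map.2 ⟨x, List.mem_finRange x, rfl⟩))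

/-- with `C' = A'B'` as in the construction (rows indexed by
`x ∈ {0,1}^ℓ`, columns by `(y, k) ∈ {0,1}^ℓ × {0,…,2ℓ-1}`, both in
lexicographic order), the binary string of length `2^{2ℓ}·2ℓ` obtained by
reading `C'` row by row contains every binary string of length `2ℓ` as a
contiguous substring; in fact, for all `x, y` the block of row `x` at the
columns `(y,0),…,(y,2ℓ-1)` is exactly `x ∘ y`. -/
theorem stmt12 (ℓ : ℕ) (hℓ : 1 ≤ ℓ) :
    let A' : Matrix (Fin (2 ^ ℓ)) (Fin (2 * ℓ)) ℕ :=
      fun x j => if (j : ℕ) < ℓ then bitOf ℓ x j else 1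
    let B' : Matrix (Fin (2 * ℓ)) (Fin (2 ^ ℓ) × Fin (2 * ℓ)) ℕ :=
      fun i yk => if (i : ℕ) = (yk.2 : ℕ) then
          (if (yk.2 : ℕ) < ℓ then 1 else bitOf ℓ yk.1 ((yk.2 : ℕ) - ℓ))
        else 0
    -- the entries of `C' = A'B'` read row by row (columns `(y,k)` in
    -- lexicographic order within each row)
    let rowStr : List ℕ :=
      ((List.finRange (2 ^ ℓ)).map (fun x =>
        ((List.finRange (2 ^ ℓ)).map (fun y =>
          (List.finRange (2 * ℓ)).map (fun k => (A' * B') x (y, k)))).flatten)).flatten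
    (∀ w : List ℕ, w.length = 2 * ℓ → (∀ b ∈ w, b = 0 ∨ b = 1) → w <:+: rowStr) ∧
    ∀ x y : Fin (2 ^ ℓ),
      ((List.finRange (2 * ℓ)).map (fun k => (A' * B') x (y, k))) =
        (List.range ℓ).map (bitOf ℓ x) ++ (List.range ℓ).map (bitOf ℓ y) :=
  stmt12_general ℓ
end

section
/- Let ℓ ≥ 1 and let C' = A'B' be the (2^ℓ × 2^ℓ·2ℓ) matrix defined as follows: rows of A' are indexed by x ∈ {0,1}^ℓ in lexicographic order with A'[x, j] = x_j for 1 ≤ j ≤ ℓ and A'[x, j] = 1 for ℓ < j ≤ 2ℓ; columns of B' are indexed by (y, k) ∈ {0,1}^ℓ × {1, …, 2ℓ} in lexicographic order with B'[i,(y,k)] = 1 if i = k ≤ ℓ, B'[i,(y,k)] = y_{k−ℓ} if i = k > ℓ, and B'[i,(y,k)] = 0 otherwise. Then every SLP over the alphabet {0,1} that generates the string obtained by reading the entries of C' row by row has size at least 2^{2ℓ}/(2ℓ). -/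
/-!
An SLP of size `n` generating `s` can only produce a factor of `s` of length `m ≥ 2` by straddling
the boundary of the concatenation performed by one of its pair rules, and each pair rule has at
most `m - 1` such straddling factors; so `s` has at most `n (m - 1)` distinct factors of length `m`.
The row string of `C' = A'B'` consists of the blocks `bits x ++ bits y` for all pairs
`x, y ∈ {0,1}^ℓ`, i.e. it contains all `2^{2ℓ}` words of length `m = 2ℓ` as factors.
-/

section Straddling

variable {α : Type*} [DecidableEq α]

def straddlingInfixes (m : ℕ) (u v : List α) : Finset (List α) :=
  (Finset.Ioo 0 m).image fun r => u.drop (u.length - r) ++ v.take (m - r)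

theorem card_straddlingInfixes_le (m : ℕ) (u v : List α) :
    (straddlingInfixes m u v).card ≤ m - 1 :=
  Finset.card_image_le.trans (by simp)

theorem infix_or_mem_straddlingInfixes_of_infix_append {t u v : List α} (h : t <:+: u ++ v) :
    t <:+: u ∨ t <:+: v ∨ t ∈ straddlingInfixes t.length u v := by
  rcases List.infix_append_iff_ne_nil.1 h with h | h | ⟨t₁, t₂, h₁, h₂, rfl, hsuf, hpre⟩
  · exact .inl h
  · exact .inr (.inl h)
  refine .inr (.inr (Finset.mem_image.2 ⟨t₁.length, ?_, ?_⟩))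
  · simp only [Finset.mem_Ioo, List.length_append]
    have := List.length_pos_iff.2 h₁
    have := List.length_pos_iff.2 h₂
    omega
  · rw [List.length_append, Nat.add_sub_cancel_left, ← List.suffix_iff_eq_drop.1 hsuf,
      ← List.prefix_iff_eq_take.1 hpre]

end Straddling

namespace SLP

variable {α : Type*}

theorem exists_mem_of_infix_getD {acc : List (List α)} {t : List α} {j : ℕ}
    (ht : t <:+: acc.getD j []) (hne : t ≠ []) : ∃ w ∈ acc, t <:+: w := by
  rcases lt_or_ge j acc.length with hj | hj
  · exact ⟨_, List.getElem_mem hj, List.getD_eq_getElem acc [] hj ▸ ht⟩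
  · rw [List.getD_eq_default acc [] hj, List.infix_nil] at ht
    exact absurd ht hne

variable [DecidableEq α]

def ruleInfixes (m : ℕ) (acc : List (List α)) : SLPRule α → Finset (List α)
  | .sym _ => ∅
  | .pair j k => straddlingInfixes m (acc.getD j []) (acc.getD k [])

theorem card_ruleInfixes_le (m : ℕ) (acc : List (List α)) (r : SLPRule α) :
    (ruleInfixes m acc r).card ≤ m - 1 := by
  cases r with
  | sym a => simp [ruleInfixes]
  | pair j k => exact card_straddlingInfixes_le ..

theorem infix_evalRule {m : ℕ} (hm : 2 ≤ m) {acc : List (List α)} {r : SLPRule α}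
    {t : List α} (ht : t <:+: evalRule acc r) (htm : t.length = m) :
    (∃ w ∈ acc, t <:+: w) ∨ t ∈ ruleInfixes m acc r := by
  have hne : t ≠ [] := List.ne_nil_of_length_pos (by omega)
  cases r with
  | sym a =>
    have := ht.length_le
    simp only [evalRule, List.length_singleton] at this
    omega
  | pair j k =>
    rcases infix_or_mem_straddlingInfixes_of_infix_append ht with h | h | h
    · exact .inl (exists_mem_of_infix_getD h hne)
    · exact .inl (exists_mem_of_infix_getD h hne)
    · exact .inr (htm ▸ h)

theorem exists_finset_infixes_evalsOf {m : ℕ} (hm : 2 ≤ m) (rs : List (SLPRule α)) :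
    ∃ C : Finset (List α), C.card ≤ rs.length * (m - 1) ∧
      ∀ w ∈ evalsOf rs, ∀ t, t <:+: w → t.length = m → t ∈ C := by
  induction rs using List.reverseRecOn with
  | nil => exact ⟨∅, by simp, by simp [evalsOf]⟩
  | append_singleton rs r ih =>
    obtain ⟨C, hcard, hC⟩ := ih
    refine ⟨C ∪ ruleInfixes m (evalsOf rs) r, ?_, ?_⟩
    · calc (C ∪ ruleInfixes m (evalsOf rs) r).card
          ≤ C.card + (ruleInfixes m (evalsOf rs) r).card := Finset.card_union_le ..
        _ ≤ rs.length * (m - 1) + (m - 1) := add_le_add hcard (card_ruleInfixes_le ..)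
        _ = (rs ++ [r]).length * (m - 1) := by simp [add_mul]
    · intro w hw t ht htm
      rw [evalsOf_append_singleton, List.mem_append, List.mem_singleton] at hw
      rcases hw with hw | rfl
      · exact Finset.mem_union_left _ (hC w hw t ht htm)
      rcases infix_evalRule hm ht htm with ⟨w', hw', ht'⟩ | h
      · exact Finset.mem_union_left _ (hC w' hw' t ht' htm)
      · exact Finset.mem_union_right _ h

theorem card_le_size_mul_of_generates {G : SLP α} {s : List α} (hG : G.generates s)
    {m : ℕ} (hm : 2 ≤ m) {S : Finset (List α)} (hS : ∀ t ∈ S, t <:+: s ∧ t.length = m) :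
    S.card ≤ G.size * (m - 1) := by
  obtain ⟨C, hcard, hC⟩ := exists_finset_infixes_evalsOf hm G.rules
  have hs : s ∈ evalsOf G.rules := G.evals_eq_evalsOf ▸ List.mem_of_getLast? hG
  exact (Finset.card_le_card fun t ht => hC s hs t (hS t ht).1 (hS t ht).2).trans hcard

end SLP

def bitWord (ℓ x : ℕ) : List (Fin 2) :=
  (List.range ℓ).map fun j => if bitOf ℓ x j = 1 then 1 else 0

@[simp]
theorem length_bitWord (ℓ x : ℕ) : (bitWord ℓ x).length = ℓ := by
  simp [bitWord]

theorem bitOf_eq_one_iff (ℓ x j : ℕ) : bitOf ℓ x j = 1 ↔ x.testBit (ℓ - 1 - j) := by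
  simp [bitOf, Nat.testBit_eq_decide_div_mod_eq]

theorem bitWord_inj {ℓ x y : ℕ} (hx : x < 2 ^ ℓ) (hy : y < 2 ^ ℓ)
    (h : bitWord ℓ x = bitWord ℓ y) : x = y := by
  refine Nat.eq_of_testBit_eq fun i => ?_
  rcases lt_or_ge i ℓ with hi | hi
  · have hj := congrArg (·[ℓ - 1 - i]?) h
    simp only [bitWord, List.getElem?_map, List.getElem?_range (show ℓ - 1 - i < ℓ by omega),
      Option.map_some, Option.some.injEq, bitOf_eq_one_iff,
      show ℓ - 1 - (ℓ - 1 - i) = i by omega] at hj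
    cases hxi : x.testBit i <;> cases hyi : y.testBit i <;> simp_all
  · have h2 : 2 ^ ℓ ≤ 2 ^ i := Nat.pow_le_pow_right two_pos hi
    rw [Nat.testBit_lt_two_pow (hx.trans_le h2), Nat.testBit_lt_two_pow (hy.trans_le h2)]

theorem bitWord_append_injective (ℓ : ℕ) :
    Function.Injective fun xy : Fin (2 ^ ℓ) × Fin (2 ^ ℓ) => bitWord ℓ xy.1 ++ bitWord ℓ xy.2 := by
  rintro ⟨x, y⟩ ⟨x', y'⟩ h
  obtain ⟨hx, hy⟩ := List.append_inj h (by simp)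
  simp only [Prod.mk.injEq, Fin.ext_iff]
  exact ⟨bitWord_inj x.isLt x'.isLt hx, bitWord_inj y.isLt y'.isLt hy⟩

theorem map_finRange_eq_bitWord_append {ℓ x y : ℕ} {f : Fin (2 * ℓ) → ℕ}
    (hf : ∀ k : Fin (2 * ℓ), f k = if (k : ℕ) < ℓ then bitOf ℓ x k else bitOf ℓ y (k - ℓ)) :
    ((List.finRange (2 * ℓ)).map f).map (fun v => if v = 1 then (1 : Fin 2) else 0) =
      bitWord ℓ x ++ bitWord ℓ y := by
  obtain rfl : f = (fun k : ℕ => if k < ℓ then bitOf ℓ x k else bitOf ℓ y (k - ℓ)) ∘ Fin.val :=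
    funext hf
  rw [← List.map_map, List.map_coe_finRange_eq_range, two_mul, List.range_add, List.map_append,
    List.map_append, List.map_map, List.map_map, List.map_map]
  simp only [bitWord]
  congr 1
  · refine List.map_congr_left fun k hk => ?_
    simp [List.mem_range.1 hk]
  · refine List.map_congr_left fun k _ => ?_
    simp

theorem infix_flatten_map_finRange {β : Type*} {m n p : ℕ} (C : Fin m → Fin n → Fin p → β)
    (x : Fin m) (y : Fin n) :
    (List.finRange p).map (C x y) <:+:
      ((List.finRange m).map fun x =>
        ((List.finRange n).map fun y => (List.finRange p).map (C x y)).flatten).flatten :=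
  (List.infix_of_mem_flatten (List.mem_map_of_mem (f := fun y => (List.finRange p).map (C x y))
    (List.mem_finRange y))).trans
    (List.infix_of_mem_flatten (List.mem_map_of_mem (List.mem_finRange x)))

/-- with `C' = A'B'` as in the construction, every SLP over the
alphabet `{0,1}` generating the string obtained by reading the entries of `C'`
row by row (a string of `0`s and `1`s, here identified with elements of
`Fin 2`) has size at least `2^{2ℓ}/(2ℓ)`. -/
theorem stmt13 (ℓ : ℕ) (hℓ : 1 ≤ ℓ) :
    let A' : Matrix (Fin (2 ^ ℓ)) (Fin (2 * ℓ)) ℕ :=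
      fun x j => if (j : ℕ) < ℓ then bitOf ℓ x j else 1
    let B' : Matrix (Fin (2 * ℓ)) (Fin (2 ^ ℓ) × Fin (2 * ℓ)) ℕ :=
      fun i yk => if (i : ℕ) = (yk.2 : ℕ) then
          (if (yk.2 : ℕ) < ℓ then 1 else bitOf ℓ yk.1 ((yk.2 : ℕ) - ℓ))
        else 0
    -- the entries of `C' = A'B'` (each of which is `0` or `1`) read row by
    -- row, as a string over the alphabet `{0,1}`
    let rowStr : List (Fin 2) :=
      (((List.finRange (2 ^ ℓ)).map (fun x =>
        ((List.finRange (2 ^ ℓ)).map (fun y =>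
          (List.finRange (2 * ℓ)).map (fun k => (A' * B') x (y, k)))).flatten)).flatten).map
        (fun v => if v = 1 then (1 : Fin 2) else 0)
    ∀ G : SLP (Fin 2), G.generates rowStr →
      (2 : ℝ) ^ (2 * ℓ) / (2 * ℓ) ≤ (G.size : ℝ) := by
  intro A' B' rowStr G hG
  have hentry (x y : Fin (2 ^ ℓ)) (k : Fin (2 * ℓ)) :
      (A' * B') x (y, k) = if (k : ℕ) < ℓ then bitOf ℓ x k else bitOf ℓ y (k - ℓ) := by
    rw [Matrix.mul_apply]
    simp only [A', B', Fin.val_inj, mul_ite, mul_zero, Finset.sum_ite_eq', Finset.mem_univ,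
      if_true]
    split_ifs <;> simp
  set S := (Finset.univ : Finset (Fin (2 ^ ℓ) × Fin (2 ^ ℓ))).image
    fun xy => bitWord ℓ xy.1 ++ bitWord ℓ xy.2
  have hS : S.card ≤ G.size * (2 * ℓ - 1) := by
    refine G.card_le_size_mul_of_generates hG (by omega) fun t ht => ?_
    obtain ⟨⟨x, y⟩, -, rfl⟩ := Finset.mem_image.1 ht
    refine ⟨?_, by simp [two_mul]⟩
    rw [← map_finRange_eq_bitWord_append (hentry x y)]
    exact (infix_flatten_map_finRange (fun x y k => (A' * B') x (y, k)) x y).map _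
  rw [Finset.card_image_of_injective _ (bitWord_append_injective ℓ), Finset.card_univ,
    Fintype.card_prod, Fintype.card_fin, ← pow_add, ← two_mul] at hS
  have h2ℓ : (0 : ℝ) < 2 * ℓ := by positivity
  rw [div_le_iff₀ h2ℓ]
  calc (2 : ℝ) ^ (2 * ℓ) ≤ (G.size * (2 * ℓ - 1) : ℕ) := by exact_mod_cast hS
    _ ≤ (G.size * (2 * ℓ) : ℕ) := by gcongr; omega
    _ = G.size * (2 * ℓ) := by push_cast; rfl
end
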